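/- arXiv:1608.08156 — 4 statements merged into one kernel-verified Lean document; each statement's English description precedes it below -/
import Mathlib

section
/- Let K be a perfect field of characteristic p > 0, S = K[x_1,...,x_n], and Φ : F_*S → S the S-linear map sending F_*(x_1^{p-1}...x_n^{p-1}) to 1 and all other standard basis monomials F_*(x^α), α ∈ {0,...,p-1}^n, to 0. If f ∈ S is written as F_*f = Σ_{α ∈ {0,...,p-1}^n} s_α · F_*(x^α) with s_α ∈ S (i.e., f = Σ_α s_α^p x^α), then the image Φ(F_*(f·S)) of the ideal generated by f under Φ equals the ideal of S generated by all the coefficients s_α. -/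
/-!
Coefficient extraction `Φ` is additive and Frobenius-semilinear, `Φ(g ^ p * f) = g * Φ(f)`, since
the coefficient of `x ^ (p • e + (p - 1, …, p - 1))` in `x ^ (p • d) * f` is that of
`x ^ (p • (e - d) + (p - 1, …, p - 1))` in `f`. Hence `Φ(f * h) = Σ_α s_α * Φ(x ^ α * h)` lies in
`(s_α)`. Conversely the monomials `x ^ α` and `x ^ ((p - 1) - β)` are dual under `Φ`, so
`Φ(f * x ^ ((p - 1) - β)) = s_β`.
-/

open MvPolynomial

/-- For `F_*S` free over `S = K[x_1,…,x_n]` with basis `{F_*(x^α) : α ∈ {0,…,p-1}^n}`,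
`frobCoeff p α f` is the coefficient `s_α ∈ S` in the expansion
`F_*f = Σ_α s_α • F_*(x^α)`, i.e. `f = Σ_α s_α^p x^α`. -/
noncomputable def frobCoeff {K : Type*} [Field K] (p : ℕ) [Fact p.Prime] [ExpChar K p]
    [PerfectRing K p] {n : ℕ} (α : Fin n → ℕ) (f : MvPolynomial (Fin n) K) :
    MvPolynomial (Fin n) K :=
  ∑ d ∈ f.support,
    if ∀ i, d i % p = α i then
      monomial (Finsupp.mapRange (· / p) (Nat.zero_div p) d)
        ((frobeniusEquiv K p).symm (f.coeff d))
    else 0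

/-- The generating trace map `Φ : F_*S → S`, the `S`-linear projection onto the
coefficient of `F_*(x_1^(p-1) ⋯ x_n^(p-1))`. -/
noncomputable def phi {K : Type*} [Field K] (p : ℕ) [Fact p.Prime] [ExpChar K p]
    [PerfectRing K p] {n : ℕ} (f : MvPolynomial (Fin n) K) : MvPolynomial (Fin n) K :=
  frobCoeff p (fun _ => p - 1) f

/-- The ideal `Φ(F_*(f•S)) = {Φ(F_*(f•h)) : h ∈ S}`, which computes the test ideal
`τ(S, f^(1/p))`. -/
noncomputable def tauP {K : Type*} [Field K] (p : ℕ) [Fact p.Prime] [ExpChar K p]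
    [PerfectRing K p] {n : ℕ} (f : MvPolynomial (Fin n) K) : Ideal (MvPolynomial (Fin n) K) :=
  Ideal.span {g | ∃ h, g = phi p (f * h)}

namespace Finsupp

variable {σ : Type*} {p : ℕ} {r : σ →₀ ℕ}

theorem mapRange_div_eq_iff (hr : ∀ i, r i < p) (d e : σ →₀ ℕ) :
    ((∀ i, d i % p = r i) ∧ mapRange (· / p) (Nat.zero_div p) d = e) ↔
      d = p • e + r := by
  simp only [Finsupp.ext_iff, ← forall_and, mapRange_apply, add_apply, smul_apply, smul_eq_mul]
  refine forall_congr' fun i => ⟨fun ⟨hmod, hdiv⟩ => ?_, fun h => ?_⟩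
  · rw [← Nat.div_add_mod (d i) p, hmod, hdiv]
  · have hp : 0 < p := (Nat.zero_le _).trans_lt (hr i)
    rw [h, Nat.mul_add_mod, Nat.mod_eq_of_lt (hr i), Nat.mul_add_div hp, Nat.div_eq_of_lt (hr i),
      add_zero]
    exact ⟨rfl, rfl⟩

theorem smul_le_smul_add_iff (hr : ∀ i, r i < p) {b e : σ →₀ ℕ} :
    p • b ≤ p • e + r ↔ b ≤ e := by
  simp only [Finsupp.le_def, add_apply, smul_apply, smul_eq_mul]
  refine forall_congr' fun i => ⟨fun h => ?_, fun h => le_add_right (Nat.mul_le_mul_left p h)⟩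
  by_contra! hlt
  have := Nat.mul_le_mul_left p (Nat.succ_le_of_lt hlt)
  rw [Nat.mul_succ] at this
  linarith [hr i]

theorem smul_add_tsub_smul {b e : σ →₀ ℕ} (hbe : b ≤ e) (r : σ →₀ ℕ) :
    p • e + r - p • b = p • (e - b) + r := by
  ext i
  simp only [tsub_apply, add_apply, smul_apply, smul_eq_mul, Nat.mul_sub]
  have := Nat.mul_le_mul_left p (hbe i)
  omega

end Finsupp

section FrobeniusCoefficients

variable {K : Type*} [Field K] (p : ℕ) [Fact p.Prime] [ExpChar K p] [PerfectRing K p] {n : ℕ}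

theorem coeff_frobCoeff {α : Fin n → ℕ} (hα : ∀ i, α i < p) (f : MvPolynomial (Fin n) K)
    (e : Fin n →₀ ℕ) :
    (frobCoeff p α f).coeff e =
      (frobeniusEquiv K p).symm (f.coeff (p • e + Finsupp.equivFunOnFinite.symm α)) := by
  classical
  have hsummand : ∀ d, (if ∀ i, d i % p = α i then
        monomial (Finsupp.mapRange (· / p) (Nat.zero_div p) d)
          ((frobeniusEquiv K p).symm (f.coeff d)) else 0).coeff e =
      if d = p • e + Finsupp.equivFunOnFinite.symm α then
        (frobeniusEquiv K p).symm (f.coeff d) else 0 := by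
    intro d
    simp only [← Finsupp.mapRange_div_eq_iff (r := Finsupp.equivFunOnFinite.symm α) hα,
      Finsupp.coe_equivFunOnFinite_symm, ite_and, apply_ite (coeff e), coeff_monomial, coeff_zero]
  rw [frobCoeff, coeff_sum, Finset.sum_congr rfl fun d _ => hsummand d, Finset.sum_ite_eq']
  split_ifs with h
  · rfl
  · rw [notMem_support_iff.mp h, map_zero]

theorem frobCoeff_add {α : Fin n → ℕ} (hα : ∀ i, α i < p) (f g : MvPolynomial (Fin n) K) :
    frobCoeff p α (f + g) = frobCoeff p α f + frobCoeff p α g := by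
  ext e
  simp only [coeff_frobCoeff p hα, coeff_add, map_add]

theorem frobCoeff_pow_mul {α : Fin n → ℕ} (hα : ∀ i, α i < p) (g f : MvPolynomial (Fin n) K) :
    frobCoeff p α (g ^ p * f) = g * frobCoeff p α f := by
  induction g using MvPolynomial.induction_on' with
  | add a b ha hb => rw [add_pow_expChar, add_mul, frobCoeff_add p hα, ha, hb, add_mul]
  | monomial d c =>
    ext e
    rw [monomial_pow, coeff_frobCoeff p hα, coeff_monomial_mul', coeff_monomial_mul',
      apply_ite (frobeniusEquiv K p).symm, map_zero]
    have hle : p • d ≤ p • e + Finsupp.equivFunOnFinite.symm α ↔ d ≤ e :=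
      Finsupp.smul_le_smul_add_iff hα
    by_cases hde : d ≤ e
    · rw [if_pos (hle.mpr hde), if_pos hde, Finsupp.smul_add_tsub_smul hde, map_mul,
        frobeniusEquiv_symm_pow, coeff_frobCoeff p hα]
    · rw [if_neg (mt hle.mp hde), if_neg hde]

end FrobeniusCoefficients

theorem Nat.add_sub_sub_eq_mul_add_sub_iff {p a b k : ℕ} (ha : a < p) (hb : b < p) :
    a + (p - 1 - b) = p * k + (p - 1) ↔ a = b ∧ k = 0 := by
  rcases k with _ | k
  · omega
  · have : p ≤ p * (k + 1) := Nat.le_mul_of_pos_right p k.succ_pos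
    omega

theorem MvPolynomial.prod_X_pow_eq_monomial' {R : Type*} [CommSemiring R] {n : ℕ}
    (g : Fin n → ℕ) :
    ∏ i, (X i : MvPolynomial (Fin n) R) ^ g i = monomial (Finsupp.equivFunOnFinite.symm g) 1 := by
  rw [monomial_eq, C_1, one_mul, Finsupp.prod_fintype _ _ fun _ => pow_zero _]
  rfl

section Phi

variable {K : Type*} [Field K] (p : ℕ) [Fact p.Prime] [ExpChar K p] [PerfectRing K p] {n : ℕ}

theorem sub_one_lt_of_fact_prime : p - 1 < p :=
  Nat.sub_one_lt (Fact.out : p.Prime).ne_zero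

noncomputable def phiAddHom : MvPolynomial (Fin n) K →+ MvPolynomial (Fin n) K :=
  AddMonoidHom.mk' (phi p) (frobCoeff_add p fun _ => sub_one_lt_of_fact_prime p)

theorem phi_sum {ι : Type*} (t : Finset ι) (g : ι → MvPolynomial (Fin n) K) :
    phi p (∑ i ∈ t, g i) = ∑ i ∈ t, phi p (g i) :=
  map_sum (phiAddHom p) g t

theorem phi_pow_mul (g f : MvPolynomial (Fin n) K) : phi p (g ^ p * f) = g * phi p f :=
  frobCoeff_pow_mul p (fun _ => sub_one_lt_of_fact_prime p) g f

theorem phi_prod_X_pow_mul_prod_X_pow (a b : Fin n → Fin p) :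
    phi p ((∏ i, (X i : MvPolynomial (Fin n) K) ^ (a i : ℕ)) * ∏ i, X i ^ (p - 1 - b i)) =
      if a = b then 1 else 0 := by
  have hexp : ∀ e : Fin n →₀ ℕ, Finsupp.equivFunOnFinite.symm (fun i => (a i : ℕ)) +
      Finsupp.equivFunOnFinite.symm (fun i => p - 1 - b i) =
        p • e + Finsupp.equivFunOnFinite.symm (fun _ => p - 1) ↔ a = b ∧ e = 0 := by
    intro e
    simp only [Finsupp.ext_iff, funext_iff, Fin.ext_iff, Finsupp.add_apply, Finsupp.smul_apply,
      smul_eq_mul, Finsupp.coe_equivFunOnFinite_symm, Finsupp.coe_zero, Pi.zero_apply,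
      ← forall_and]
    exact forall_congr' fun i => Nat.add_sub_sub_eq_mul_add_sub_iff (a i).isLt (b i).isLt
  ext e
  rw [prod_X_pow_eq_monomial', prod_X_pow_eq_monomial', monomial_mul, one_mul, phi,
    coeff_frobCoeff p fun _ => sub_one_lt_of_fact_prime p, coeff_monomial,
    apply_ite (frobeniusEquiv K p).symm, map_one, map_zero]
  simp only [hexp e, ite_and]
  split_ifs <;> simp [coeff_one, eq_comm, *]

noncomputable def phiIdeal (f : MvPolynomial (Fin n) K) : Ideal (MvPolynomial (Fin n) K) where
  carrier := {g | ∃ h, g = phi p (f * h)}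
  add_mem' := by
    rintro - - ⟨h₁, rfl⟩ ⟨h₂, rfl⟩
    exact ⟨h₁ + h₂, by rw [mul_add]; exact ((phiAddHom p).map_add _ _).symm⟩
  zero_mem' := ⟨0, by rw [mul_zero]; exact ((phiAddHom p).map_zero).symm⟩
  smul_mem' := by
    rintro c - ⟨h, rfl⟩
    exact ⟨c ^ p * h, by rw [mul_left_comm, phi_pow_mul, smul_eq_mul]⟩

variable {p} {f : MvPolynomial (Fin n) K} {s : (Fin n → Fin p) → MvPolynomial (Fin n) K}

theorem phi_mul_eq_sum (hf : f = ∑ α : Fin n → Fin p, s α ^ p * ∏ i, X i ^ (α i : ℕ))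
    (h : MvPolynomial (Fin n) K) :
    phi p (f * h) = ∑ α : Fin n → Fin p, s α * phi p ((∏ i, X i ^ (α i : ℕ)) * h) := by
  rw [hf, Finset.sum_mul, phi_sum]
  simp only [mul_assoc, phi_pow_mul]

theorem phiIdeal_eq_span (hf : f = ∑ α : Fin n → Fin p, s α ^ p * ∏ i, X i ^ (α i : ℕ)) :
    phiIdeal p f = Ideal.span (Set.range s) := by
  refine le_antisymm ?_ ((Ideal.span_le).mpr ?_)
  · rintro - ⟨h, rfl⟩
    rw [phi_mul_eq_sum hf]
    exact Ideal.sum_mem _ fun α _ => Ideal.mul_mem_right _ _ (Ideal.subset_span ⟨α, rfl⟩)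
  · rintro - ⟨α, rfl⟩
    refine ⟨∏ i, X i ^ (p - 1 - α i), ?_⟩
    simp [phi_mul_eq_sum hf, phi_prod_X_pow_mul_prod_X_pow]

end Phi

/-- if `f = Σ_{α ∈ {0,…,p-1}^n} s_α^p x^α`, then the image
`Φ(F_*(f·S)) = {Φ(F_*(f·h)) : h ∈ S}` equals the ideal generated by the coefficients `s_α`. -/
theorem statement1 {K : Type*} [Field K] (p : ℕ) [Fact p.Prime] [ExpChar K p]
    [PerfectRing K p] (n : ℕ) (f : MvPolynomial (Fin n) K)
    (s : (Fin n → Fin p) → MvPolynomial (Fin n) K)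
    (hf : f = ∑ α : Fin n → Fin p, s α ^ p * ∏ i, X i ^ (α i : ℕ)) :
    {g | ∃ h, g = phi p (f * h)} =
      (Ideal.span (Set.range s) : Set (MvPolynomial (Fin n) K)) :=
  congrArg SetLike.coe (phiIdeal_eq_span hf)
end

section
/- Let K be an infinite field, S = K[x_1,...,x_{n-1}] with n ≥ 3, and let l_0,...,l_{p-1} be linear forms (homogeneous of degree 1) in S in general position (any two are linearly independent, and more strongly the hyperplanes V(l_j) are distinct). Define f_i = ∏_{j ≠ i} l_j for i = 0,...,p-1. Then for each i, f_i ∉ ⟨f_0,...,f_{i-1}⟩_S. -/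
open MvPolynomial

namespace MvPolynomial

variable {σ : Type*}

theorem IsHomogeneous.eq_C_mul_of_dvd {R : Type*} [CommRing R] [IsDomain R]
    {a b : MvPolynomial σ R} {n : ℕ} (ha : a.IsHomogeneous n) (hb : b.IsHomogeneous n)
    (hb0 : b ≠ 0) (hab : a ∣ b) : ∃ c : R, b = C c * a := by
  obtain ⟨g, rfl⟩ := hab
  obtain ⟨ha0, hg0⟩ := mul_ne_zero_iff.mp hb0
  have hdeg := totalDegree_mul_of_isDomain ha0 hg0
  rw [hb.totalDegree hb0, ha.totalDegree ha0] at hdeg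
  have hg : g = C (g.coeff 0) := totalDegree_eq_zero_iff_eq_C.mp (by omega)
  exact ⟨g.coeff 0, by rw [mul_comm, ← hg]⟩

theorem IsHomogeneous.prime_of_degree_one {K : Type*} [Field K] {l : MvPolynomial σ K}
    (hl : l.IsHomogeneous 1) (hl0 : l ≠ 0) : Prime l := by
  refine (irreducible_of_totalDegree_eq_one (hl.totalDegree hl0) fun x hx => ?_).prime
  refine isUnit_iff_ne_zero.mpr fun hx0 => hl0 (MvPolynomial.ext _ _ fun d => ?_)
  simpa [hx0] using hx d

end MvPolynomial

theorem statement7_general {K : Type*} [Field K] (p m : ℕ)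
    (l : Fin p → MvPolynomial (Fin m) K)
    (hhom : ∀ j, (l j).IsHomogeneous 1) (hne : ∀ j, l j ≠ 0)
    (hprop : ∀ i j, i ≠ j → ∀ c : K, l i ≠ C c * l j) :
    ∀ i : Fin p, (∏ j ∈ Finset.univ.erase i, l j) ∉
      Ideal.span {g | ∃ j : Fin p, j < i ∧ g = ∏ k ∈ Finset.univ.erase j, l k} := by
  intro i hmem
  have hle : Ideal.span {g | ∃ j : Fin p, j < i ∧ g = ∏ k ∈ Finset.univ.erase j, l k}
      ≤ Ideal.span {l i} := by
    rw [Ideal.span_le]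
    rintro g ⟨j, hj, rfl⟩
    exact Ideal.mem_span_singleton.mpr
      (Finset.dvd_prod_of_mem l (Finset.mem_erase.mpr ⟨hj.ne', Finset.mem_univ i⟩))
  obtain ⟨k, hk, hdvd⟩ := ((hhom i).prime_of_degree_one (hne i)).exists_mem_finset_dvd
    (Ideal.mem_span_singleton.mp (hle hmem))
  obtain ⟨c, hc⟩ := (hhom i).eq_C_mul_of_dvd (hhom k) (hne k) hdvd
  exact hprop k i (Finset.ne_of_mem_erase hk) c hc

/-- over an infinite field, for pairwise non-proportional linear forms
`l_0, …, l_(p-1)` in `K[x_1, …, x_(n-1)]` (`n ≥ 3`) and `f_i = ∏_(j ≠ i) l_j`, one has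
`f_i ∉ ⟨f_0, …, f_(i-1)⟩` for every `i`. -/
theorem statement7 {K : Type*} [Field K] [Infinite K] (p m : ℕ) [Fact p.Prime] (hm : 2 ≤ m)
    (l : Fin p → MvPolynomial (Fin m) K)
    (hhom : ∀ j, (l j).IsHomogeneous 1) (hne : ∀ j, l j ≠ 0)
    (hprop : ∀ i j, i ≠ j → ∀ c : K, l i ≠ C c * l j) :
    ∀ i : Fin p, (∏ j ∈ Finset.univ.erase i, l j) ∉
      Ideal.span {g | ∃ j : Fin p, j < i ∧ g = ∏ k ∈ Finset.univ.erase j, l k} :=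
  statement7_general p m l hhom hne hprop
end

section
/- Let S = K[x_1,...,x_n], K infinite perfect of characteristic p > 0, and suppose f_0,...,f_{p-1} ∈ K[x_1,...,x_{n-1}] satisfy condition (⋆). Write f with F_*f = Σ_i f_i F_*((x_1⋯x_{n-1})^{p-1} x_n^i), fix l = c_0 + Σ c_j x_j with all c_j ≠ 0, and suppose g_0,...,g_{p-1} ∈ K[x_n] and h_{i,j} ∈ S give a presentation f_{p-1} = g_0(c_0 f_0 + c_n x_n f_{p-1}) + Σ_{1≤i≤p-1} g_i(c_0 f_i + c_n f_{i-1}) + Σ_{i,j} h_{i,j} x_j f_i. Then c_n g_i = -c_0 g_{i-1} for each i = 1,...,p-1, and g_{p-1} = c_0^{-1}(1 - c_n x_n g_0). -/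
open MvPolynomial

/-- The identification `S/(l) ≅ R = K[x_1,…,x_(n-1)]` for
`l = c₀^p + c₁^p x_1 + … + c_n^p x_n` with `c_n ≠ 0`: the algebra map `S → R` fixing
`x_1, …, x_(n-1)` and sending `x_n ↦ -c_n^(-p)(c₀^p + c₁^p x_1 + … + c_(n-1)^p x_(n-1))`.
Here `S` has `m+1` variables and `R` has `m` variables. -/
noncomputable def substHom {K : Type*} [Field K] (p m : ℕ) (c0 : K) (c : Fin (m + 1) → K) :
    MvPolynomial (Fin (m + 1)) K →ₐ[K] MvPolynomial (Fin m) K :=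
  aeval fun i : Fin (m + 1) =>
    if h : (i : ℕ) < m then X ⟨i, h⟩
    else -C ((c (Fin.last m))⁻¹ ^ p) *
      (C (c0 ^ p) + ∑ j : Fin m, C (c (Fin.castSucc j) ^ p) * X j)

/-- The polynomial `f` with `F_*f = Σ_(i=0)^(p-1) f_i F_*((x_1⋯x_(n-1))^(p-1) x_n^i)`,
i.e. `f = Σ_i f_i^p (x_1⋯x_(n-1))^(p-1) x_n^i`, for `f_i ∈ K[x_1,…,x_(n-1)]`. -/
noncomputable def fGen {K : Type*} [Field K] (p m : ℕ)
    (fi : ℕ → MvPolynomial (Fin m) K) : MvPolynomial (Fin (m + 1)) K :=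
  ∑ i ∈ Finset.range p, (rename Fin.castSucc (fi i)) ^ p *
    (∏ j : Fin m, X (Fin.castSucc j)) ^ (p - 1) * X (Fin.last m) ^ i

noncomputable def Tq (K : Type*) [Field K] (m : ℕ) :
    MvPolynomial (Fin (m+1)) K ≃ₐ[K] Polynomial (MvPolynomial (Fin m) K) :=
  (renameEquiv K (finSuccEquiv' (Fin.last m))).trans (optionEquivLeft K (Fin m))

theorem Tq_C (K : Type*) [Field K] (m : ℕ) (a : K) : Tq K m (C a) = Polynomial.C (C a) := by
  simp [Tq, optionEquivLeft_C]

theorem Tq_X (K : Type*) [Field K] (m : ℕ) : Tq K m (X (Fin.last m)) = Polynomial.X := by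
  simp [Tq, finSuccEquiv'_at, optionEquivLeft_X_none]

theorem Tq_Xc (K : Type*) [Field K] (m : ℕ) (j : Fin m) :
    Tq K m (X (Fin.castSucc j)) = Polynomial.C (X j) := by
  simp [Tq, finSuccEquiv'_below (Fin.castSucc_lt_last j), optionEquivLeft_X_some]

theorem Tq_rename (K : Type*) [Field K] (m : ℕ) (g : MvPolynomial (Fin m) K) :
    Tq K m (rename Fin.castSucc g) = Polynomial.C g := by
  induction g using MvPolynomial.induction_on with
  | C a => rw [rename_C, Tq_C]
  | add p q hp hq => rw [map_add, map_add, hp, hq, map_add]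
  | mul_X p i hp => rw [map_mul, rename_X, map_mul, hp, Tq_Xc, ← map_mul]

theorem aevalX_eq_map (K R : Type*) [Field K] [CommRing R] [Algebra K R] (g : Polynomial K) :
    Polynomial.aeval (Polynomial.X : Polynomial R) g = g.map (algebraMap K R) := by
  induction g using Polynomial.induction_on' with
  | add p q hp hq => rw [map_add, hp, hq, Polynomial.map_add]
  | monomial n a =>
      simp [Polynomial.aeval_monomial, Polynomial.map_monomial, Polynomial.algebraMap_apply,
        Polynomial.C_mul_X_pow_eq_monomial]

theorem Tq_aeval (K : Type*) [Field K] (m : ℕ) (g : Polynomial K) :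
    Tq K m (Polynomial.aeval (X (Fin.last m)) g)
      = g.map (algebraMap K (MvPolynomial (Fin m) K)) := by
  rw [← Polynomial.aeval_algHom_apply, Tq_X, aevalX_eq_map]


/-- the Claim: with `f_i` satisfying (⋆), if `g_0,…,g_(p-1) ∈ K[x_n]` and
`h_(i,j) ∈ S` give a presentation
`f_(p-1) = g_0(c₀f_0 + c_n x_n f_(p-1)) + Σ_(1≤i≤p-1) g_i(c₀f_i + c_n f_(i-1)) + Σ h_(i,j) x_j f_i`,
then `c_n g_i = -c₀ g_(i-1)` for `i = 1,…,p-1` and `g_(p-1) = c₀^(-1)(1 - c_n x_n g_0)`. -/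
theorem statement13 {K : Type*} [Field K] [Infinite K] (p m : ℕ) [Fact p.Prime] [ExpChar K p]
    [PerfectRing K p] (hm : 2 ≤ m) (fi : ℕ → MvPolynomial (Fin m) K)
    (hstar : ∀ i < p, (rename Fin.castSucc (fi i) : MvPolynomial (Fin (m + 1)) K) ∉
      Ideal.span {g | ∃ j < i, g = rename Fin.castSucc (fi j)} +
        Ideal.span (Set.range fun j : Fin m =>
            (X (Fin.castSucc j) : MvPolynomial (Fin (m + 1)) K)) *
          Ideal.span {g | ∃ j < p, g = rename Fin.castSucc (fi j)})
    (c0 : K) (c : Fin (m + 1) → K) (hc0 : c0 ≠ 0) (hc : ∀ j, c j ≠ 0)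
    (gp : ℕ → Polynomial K) (h : ℕ → Fin m → MvPolynomial (Fin (m + 1)) K)
    (hpres : (rename Fin.castSucc (fi (p - 1)) : MvPolynomial (Fin (m + 1)) K) =
      Polynomial.aeval (X (Fin.last m) : MvPolynomial (Fin (m + 1)) K) (gp 0) *
          (C c0 * rename Fin.castSucc (fi 0) +
            C (c (Fin.last m)) * X (Fin.last m) * rename Fin.castSucc (fi (p - 1))) +
        (∑ i ∈ Finset.Icc 1 (p - 1),
          Polynomial.aeval (X (Fin.last m) : MvPolynomial (Fin (m + 1)) K) (gp i) *
            (C c0 * rename Fin.castSucc (fi i) +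
              C (c (Fin.last m)) * rename Fin.castSucc (fi (i - 1)))) +
        ∑ i ∈ Finset.range p, ∑ j : Fin m,
          h i j * X (Fin.castSucc j) * rename Fin.castSucc (fi i)) :
    (∀ i, 1 ≤ i → i ≤ p - 1 →
        Polynomial.C (c (Fin.last m)) * gp i = -Polynomial.C c0 * gp (i - 1)) ∧
      gp (p - 1) = Polynomial.C c0⁻¹ * (1 - Polynomial.C (c (Fin.last m)) * Polynomial.X * gp 0) := by
  classical
  have hq2 : 2 ≤ p := (Fact.out (p := p.Prime)).two_le
  obtain ⟨q, rfl⟩ : ∃ q, p = q + 1 := ⟨p - 1, by omega⟩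
  have hq1 : 1 ≤ q := by omega
  simp only [Nat.add_sub_cancel] at hpres ⊢
  have hT := congrArg (Tq K m) hpres
  simp only [map_add, map_mul, map_sum, Tq_aeval, Tq_C, Tq_X, Tq_Xc, Tq_rename] at hT
  have hT2 : Polynomial.C (fi q) =
      (gp 0).map (algebraMap K (MvPolynomial (Fin m) K)) *
          (Polynomial.C (C c0) * Polynomial.C (fi 0) +
            Polynomial.C (C (c (Fin.last m))) * Polynomial.X * Polynomial.C (fi q)) +
        (∑ i ∈ Finset.Icc 1 q, (gp i).map (algebraMap K (MvPolynomial (Fin m) K)) *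
          (Polynomial.C (C c0) * Polynomial.C (fi i) +
            Polynomial.C (C (c (Fin.last m))) * Polynomial.C (fi (i - 1)))) +
        ∑ i ∈ Finset.range (q+1), ∑ j : Fin m,
          Tq K m (h i j) * Polynomial.C (X j) * Polynomial.C (fi i) := hT
  clear hT hpres
  have hIcc : ∀ (f : ℕ → Polynomial (MvPolynomial (Fin m) K)),
      ∑ i ∈ Finset.Icc 1 q, f i = ∑ i ∈ Finset.range q, f (i+1) := by
    intro f
    rw [← Finset.Ico_add_one_right_eq_Icc, Finset.sum_Ico_eq_sum_range]
    simp [Nat.add_comm]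
  simp only [hIcc, Nat.add_sub_cancel] at hT2
  have key : Polynomial.C (fi q) *
      (1 - Polynomial.C (C c0) * (gp q).map (algebraMap K (MvPolynomial (Fin m) K))
        - Polynomial.C (C (c (Fin.last m))) * Polynomial.X *
            (gp 0).map (algebraMap K (MvPolynomial (Fin m) K)))
      - ∑ i ∈ Finset.range q, Polynomial.C (fi i) *
          (Polynomial.C (C c0) * (gp i).map (algebraMap K (MvPolynomial (Fin m) K)) +
            Polynomial.C (C (c (Fin.last m))) *
              (gp (i+1)).map (algebraMap K (MvPolynomial (Fin m) K)))
      = ∑ i ∈ Finset.range (q+1), ∑ j : Fin m,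
          Tq K m (h i j) * Polynomial.C (X j) * Polynomial.C (fi i) := by
    have hsplit1 : ∑ i ∈ Finset.range q,
        (gp (i+1)).map (algebraMap K (MvPolynomial (Fin m) K)) *
          (Polynomial.C (C c0) * Polynomial.C (fi (i+1)) +
            Polynomial.C (C (c (Fin.last m))) * Polynomial.C (fi i))
        = (∑ i ∈ Finset.range q, Polynomial.C (C c0) *
              (gp (i+1)).map (algebraMap K (MvPolynomial (Fin m) K)) * Polynomial.C (fi (i+1)))
          + ∑ i ∈ Finset.range q, Polynomial.C (C (c (Fin.last m))) *
              (gp (i+1)).map (algebraMap K (MvPolynomial (Fin m) K)) * Polynomial.C (fi i) := by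
      rw [← Finset.sum_add_distrib]; exact Finset.sum_congr rfl fun i _ => by ring
    have hsplit2 : ∑ i ∈ Finset.range q, Polynomial.C (fi i) *
          (Polynomial.C (C c0) * (gp i).map (algebraMap K (MvPolynomial (Fin m) K)) +
            Polynomial.C (C (c (Fin.last m))) *
              (gp (i+1)).map (algebraMap K (MvPolynomial (Fin m) K)))
        = (∑ i ∈ Finset.range q, Polynomial.C (C c0) *
              (gp i).map (algebraMap K (MvPolynomial (Fin m) K)) * Polynomial.C (fi i))
          + ∑ i ∈ Finset.range q, Polynomial.C (C (c (Fin.last m))) *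
              (gp (i+1)).map (algebraMap K (MvPolynomial (Fin m) K)) * Polynomial.C (fi i) := by
      rw [← Finset.sum_add_distrib]; exact Finset.sum_congr rfl fun i _ => by ring
    have hshift : (Polynomial.C (C c0) *
          (gp 0).map (algebraMap K (MvPolynomial (Fin m) K)) * Polynomial.C (fi 0))
        + ∑ i ∈ Finset.range q, Polynomial.C (C c0) *
            (gp (i+1)).map (algebraMap K (MvPolynomial (Fin m) K)) * Polynomial.C (fi (i+1))
        = (∑ i ∈ Finset.range q, Polynomial.C (C c0) *
              (gp i).map (algebraMap K (MvPolynomial (Fin m) K)) * Polynomial.C (fi i))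
          + Polynomial.C (C c0) *
              (gp q).map (algebraMap K (MvPolynomial (Fin m) K)) * Polynomial.C (fi q) := by
      rw [add_comm, ← Finset.sum_range_succ' (fun i => Polynomial.C (C c0) *
          (gp i).map (algebraMap K (MvPolynomial (Fin m) K)) * Polynomial.C (fi i)) q,
        Finset.sum_range_succ]
    linear_combination hT2 + hsplit1 - hsplit2 + hshift
  clear hT2
  -- independence of the f_i modulo m*J
  have indep : ∀ b : ℕ → K,
      (∑ i ∈ Finset.range (q+1),
          C (b i) * rename Fin.castSucc (fi i) : MvPolynomial (Fin (m+1)) K) ∈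
        Ideal.span (Set.range fun j : Fin m =>
            (X (Fin.castSucc j) : MvPolynomial (Fin (m+1)) K)) *
          Ideal.span {g | ∃ j < q + 1, g = rename Fin.castSucc (fi j)} →
      ∀ i < q + 1, b i = 0 := by
    intro b hb
    by_contra hcon
    push_neg at hcon
    obtain ⟨i₁, hi₁, hbne⟩ := hcon
    set s := (Finset.range (q+1)).filter fun i => b i ≠ 0 with hs
    have hsne : s.Nonempty :=
      ⟨i₁, Finset.mem_filter.mpr ⟨Finset.mem_range.mpr hi₁, hbne⟩⟩
    obtain ⟨hi0r, hbi0⟩ := Finset.mem_filter.mp (s.max'_mem hsne)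
    set i0 := s.max' hsne with hi0def
    have hi0lt : i0 < q + 1 := Finset.mem_range.mp hi0r
    have hsplit : ∑ i ∈ Finset.range (q+1), C (b i) * rename Fin.castSucc (fi i)
        = C (b i0) * rename Fin.castSucc (fi i0)
          + ∑ i ∈ (Finset.range (q+1)).erase i0, C (b i) * rename Fin.castSucc (fi i) :=
      (Finset.add_sum_erase _ _ hi0r).symm
    have hrest : ∑ i ∈ (Finset.range (q+1)).erase i0, C (b i) * rename Fin.castSucc (fi i)
        ∈ Ideal.span {g | ∃ j < i0, g = (rename Fin.castSucc (fi j) :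
            MvPolynomial (Fin (m+1)) K)} := by
      refine Ideal.sum_mem _ fun i hi => ?_
      obtain ⟨hne, hir⟩ := Finset.mem_erase.mp hi
      rcases lt_or_gt_of_ne hne with hlt | hgt
      · exact Ideal.mul_mem_left _ _ (Ideal.subset_span ⟨i, hlt, rfl⟩)
      · have hbz : b i = 0 := by
          by_contra hbne2
          have := s.le_max' i (Finset.mem_filter.mpr ⟨hir, hbne2⟩)
          omega
        simp [hbz]
    have hFmem : (rename Fin.castSucc (fi i0) : MvPolynomial (Fin (m+1)) K) ∈
        Ideal.span {g | ∃ j < i0, g = rename Fin.castSucc (fi j)} +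
          Ideal.span (Set.range fun j : Fin m =>
              (X (Fin.castSucc j) : MvPolynomial (Fin (m+1)) K)) *
            Ideal.span {g | ∃ j < q + 1, g = rename Fin.castSucc (fi j)} := by
      have h1 : C (b i0) * (rename Fin.castSucc (fi i0) : MvPolynomial (Fin (m+1)) K) ∈
          Ideal.span {g | ∃ j < i0, g = rename Fin.castSucc (fi j)} +
            Ideal.span (Set.range fun j : Fin m =>
                (X (Fin.castSucc j) : MvPolynomial (Fin (m+1)) K)) *
              Ideal.span {g | ∃ j < q + 1, g = rename Fin.castSucc (fi j)} := by
        have heq : C (b i0) * (rename Fin.castSucc (fi i0) : MvPolynomial (Fin (m+1)) K)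
            = (∑ i ∈ Finset.range (q+1), C (b i) * rename Fin.castSucc (fi i))
              - ∑ i ∈ (Finset.range (q+1)).erase i0, C (b i) * rename Fin.castSucc (fi i) := by
          rw [hsplit]; ring
        rw [heq, Submodule.add_eq_sup]
        exact sub_mem (Submodule.mem_sup_right hb) (Submodule.mem_sup_left hrest)
      have h2 : (rename Fin.castSucc (fi i0) : MvPolynomial (Fin (m+1)) K)
          = C (b i0)⁻¹ * (C (b i0) * rename Fin.castSucc (fi i0)) := by
        rw [← mul_assoc, ← C_mul, inv_mul_cancel₀ hbi0, C_1, one_mul]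
      rw [h2]
      exact Ideal.mul_mem_left _ _ h1
    exact hstar i0 hi0lt hFmem
  -- rewrite key with maps of K-polynomials
  set w : Polynomial K := 1 - Polynomial.C c0 * gp q
      - Polynomial.C (c (Fin.last m)) * Polynomial.X * gp 0 with hw
  set u : ℕ → Polynomial K := fun i => Polynomial.C c0 * gp i
      + Polynomial.C (c (Fin.last m)) * gp (i+1) with hu
  have hWm : (1 - Polynomial.C (C c0) * (gp q).map (algebraMap K (MvPolynomial (Fin m) K))
      - Polynomial.C (C (c (Fin.last m))) * Polynomial.X *
          (gp 0).map (algebraMap K (MvPolynomial (Fin m) K)))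
      = w.map (algebraMap K (MvPolynomial (Fin m) K)) := by
    rw [hw]
    simp [Polynomial.map_sub, Polynomial.map_mul, Polynomial.map_one, Polynomial.map_C,
      Polynomial.map_X, MvPolynomial.algebraMap_eq]
  have hUm : ∀ i, (Polynomial.C (C c0) * (gp i).map (algebraMap K (MvPolynomial (Fin m) K)) +
      Polynomial.C (C (c (Fin.last m))) *
        (gp (i+1)).map (algebraMap K (MvPolynomial (Fin m) K)))
      = (u i).map (algebraMap K (MvPolynomial (Fin m) K)) := by
    intro i
    rw [hu]
    simp [Polynomial.map_add, Polynomial.map_mul, Polynomial.map_C, MvPolynomial.algebraMap_eq]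
  rw [hWm] at key
  simp only [hUm] at key
  -- extract coefficients and conclude vanishing
  have hvanish : ∀ k : ℕ, w.coeff k = 0 ∧ ∀ i < q, (u i).coeff k = 0 := by
    intro k
    have h1 := congrArg (fun P => Polynomial.coeff P k) key
    simp only [Polynomial.coeff_sub, Polynomial.finset_sum_coeff, Polynomial.coeff_C_mul,
      Polynomial.coeff_map, Polynomial.coeff_mul_C, MvPolynomial.algebraMap_eq] at h1
    have h2 := congrArg (MvPolynomial.rename (Fin.castSucc (n := m))) h1
    simp only [map_sub, map_sum, map_mul, rename_C, rename_X] at h2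
    have hmem : (∑ i ∈ Finset.range (q+1), ∑ j : Fin m,
        rename Fin.castSucc ((Tq K m (h i j)).coeff k) * X (Fin.castSucc j) *
          rename Fin.castSucc (fi i) : MvPolynomial (Fin (m+1)) K) ∈
        Ideal.span (Set.range fun j : Fin m =>
            (X (Fin.castSucc j) : MvPolynomial (Fin (m+1)) K)) *
          Ideal.span {g | ∃ j < q + 1, g = rename Fin.castSucc (fi j)} := by
      refine Ideal.sum_mem _ fun i hi => Ideal.sum_mem _ fun j _ => ?_
      have m1 : (X (Fin.castSucc j) : MvPolynomial (Fin (m+1)) K) ∈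
          Ideal.span (Set.range fun j : Fin m =>
            (X (Fin.castSucc j) : MvPolynomial (Fin (m+1)) K)) :=
        Ideal.subset_span ⟨j, rfl⟩
      have m2 : (rename Fin.castSucc (fi i) : MvPolynomial (Fin (m+1)) K) ∈
          Ideal.span {g | ∃ j < q + 1, g = rename Fin.castSucc (fi j)} :=
        Ideal.subset_span ⟨i, Finset.mem_range.mp hi, rfl⟩
      have m3 := Ideal.mul_mem_left _
        (rename Fin.castSucc ((Tq K m (h i j)).coeff k)) (Ideal.mul_mem_mul m1 m2)
      simpa [mul_assoc] using m3
    set b : ℕ → K := fun i => if i = q then w.coeff k else -((u i).coeff k) with hbdef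
    have hbsum : (∑ i ∈ Finset.range (q+1),
        C (b i) * rename Fin.castSucc (fi i) : MvPolynomial (Fin (m+1)) K)
        = rename Fin.castSucc (fi q) * C (w.coeff k)
          - ∑ i ∈ Finset.range q, rename Fin.castSucc (fi i) * C ((u i).coeff k) := by
      rw [Finset.sum_range_succ]
      have e1 : ∑ i ∈ Finset.range q,
          (C (b i) * rename Fin.castSucc (fi i) : MvPolynomial (Fin (m+1)) K)
          = -∑ i ∈ Finset.range q, rename Fin.castSucc (fi i) * C ((u i).coeff k) := by
        rw [← Finset.sum_neg_distrib]
        refine Finset.sum_congr rfl fun i hi => ?_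
        have : b i = -((u i).coeff k) := by
          rw [hbdef]; exact if_neg (Nat.ne_of_lt (Finset.mem_range.mp hi))
        rw [this, map_neg]; ring
      have e2 : b q = w.coeff k := by rw [hbdef]; exact if_pos rfl
      rw [e1, e2]; ring
    have hbz := indep b (by rw [hbsum, h2]; exact hmem)
    constructor
    · have hbq : b q = w.coeff k := if_pos rfl
      rw [← hbq]
      exact hbz q (by omega)
    · intro i hiq
      have hbi : b i = -((u i).coeff k) := if_neg (Nat.ne_of_lt hiq)
      have := hbz i (by omega)
      rw [hbi] at this
      exact neg_eq_zero.mp this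
  have hwz : w = 0 := Polynomial.ext fun k => (hvanish k).1
  have huz : ∀ i < q, u i = 0 := fun i hi => Polynomial.ext fun k => (hvanish k).2 i hi
  constructor
  · intro i h1i hiq
    have hz := huz (i-1) (by omega)
    rw [hu] at hz
    simp only at hz
    have h2 : i - 1 + 1 = i := by omega
    rw [h2] at hz
    linear_combination hz
  · have hz : (1 : Polynomial K) - Polynomial.C c0 * gp q
        - Polynomial.C (c (Fin.last m)) * Polynomial.X * gp 0 = 0 := by rw [← hw]; exact hwz
    have hgoal : Polynomial.C c0 * gp q
        = 1 - Polynomial.C (c (Fin.last m)) * Polynomial.X * gp 0 := by linear_combination -hz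
    calc gp q = Polynomial.C c0⁻¹ * (Polynomial.C c0 * gp q) := by
          rw [← mul_assoc, ← Polynomial.C_mul, inv_mul_cancel₀ hc0, Polynomial.C_1, one_mul]
      _ = _ := by rw [hgoal]
end

section
/- Let c_0, c_w ∈ K be nonzero elements of a field K of characteristic p > 0, and work in S = K[x,y,z,w]. The ideal I = ⟨c_0 x + c_w y^{p-1}z, c_0 y^{p-1}z + c_w y^{p-2}z^2, ..., c_0 y^2z^{p-2} + c_w yz^{p-1}, c_0 yz^{p-1} + c_w wx, x^2, xy^{p-1}z, ..., xyz^{p-1}, y^p z, y^{p-1}z^2, ..., y^2 z^{p-1}, yz^p⟩ does not contain the element x. -/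
open MvPolynomial

/-- The explicit generating set
`{c₀x + c_w y^(p-1)z} ∪ {c₀ y^(p-i)z^i + c_w y^(p-i-1)z^(i+1) : 1 ≤ i ≤ p-2} ∪
{c₀ yz^(p-1) + c_w wx, x²} ∪ {x y^(p-i)z^i : 1 ≤ i ≤ p-1} ∪
{y^(p+1-i) z^i : 1 ≤ i ≤ p}` (the last family being `y^p z, …, y² z^(p-1), y z^p`),
in `S = K[x,y,z,w]` with `x = X 0`, `y = X 1`, `z = X 2`, `w = X 3`. -/
def gens6 {K : Type*} [Field K] (p : ℕ) (c0 cw : K) : Set (MvPolynomial (Fin 4) K) :=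
  {C c0 * X 0 + C cw * X 1 ^ (p - 1) * X 2,
      C c0 * X 1 * X 2 ^ (p - 1) + C cw * X 3 * X 0, X 0 ^ 2} ∪
    {g | ∃ i, 1 ≤ i ∧ i ≤ p - 2 ∧
      g = C c0 * X 1 ^ (p - i) * X 2 ^ i + C cw * X 1 ^ (p - i - 1) * X 2 ^ (i + 1)} ∪
    {g | ∃ i, 1 ≤ i ∧ i ≤ p - 1 ∧ g = X 0 * X 1 ^ (p - i) * X 2 ^ i} ∪
    {g | ∃ i, 1 ≤ i ∧ i ≤ p ∧ g = X 1 ^ (p + 1 - i) * X 2 ^ i}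

/-!
Substitute `x = t^p, y = t, z = b t, w = w₀` into `K[t]`, with `b = -c₀/c_w` and `w₀` solving
`c₀ b^(p-1) + c_w w₀ = 0`. Every binomial of the chain then vanishes (each is
`(c₀ + c_w b)` times a monomial, the last one is killed by `w₀`), and every monomial generator
has `t`-degree at least `p + 1`. So `I` maps into `(t^(p+1))`, whereas `x` maps to `t^p`.
-/

namespace Statement15

variable {K : Type*} [Field K]

noncomputable def curve (p : ℕ) (b w : K) : Fin 4 → Polynomial K :=
  ![Polynomial.X ^ p, Polynomial.X, Polynomial.C b * Polynomial.X, Polynomial.C w]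

variable {p : ℕ} {c0 cw b w : K}

@[simp] lemma curve_zero : curve p b w 0 = Polynomial.X ^ p := rfl
@[simp] lemma curve_one : curve p b w 1 = Polynomial.X := rfl
@[simp] lemma curve_two : curve p b w 2 = Polynomial.C b * Polynomial.X := rfl
@[simp] lemma curve_three : curve p b w 3 = Polynomial.C w := rfl

lemma aeval_curve_first_binomial (hp : 1 ≤ p) (hb : c0 + cw * b = 0) :
    aeval (curve p b w) (C c0 * X 0 + C cw * X 1 ^ (p - 1) * X 2 : MvPolynomial (Fin 4) K)
      = 0 := by
  obtain ⟨n, rfl⟩ : ∃ n, p = n + 1 := ⟨p - 1, by omega⟩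
  have hbC := congrArg Polynomial.C hb
  simp only [map_add, map_mul, map_zero] at hbC
  simp only [map_add, map_mul, map_pow, aeval_X, aeval_C, Polynomial.algebraMap_eq,
    curve_zero, curve_one, curve_two, Nat.add_sub_cancel]
  linear_combination Polynomial.X ^ (n + 1) * hbC

lemma aeval_curve_chain_binomial {i : ℕ} (hi : i + 1 ≤ p) (hb : c0 + cw * b = 0) :
    aeval (curve p b w) (C c0 * X 1 ^ (p - i) * X 2 ^ i +
      C cw * X 1 ^ (p - i - 1) * X 2 ^ (i + 1) : MvPolynomial (Fin 4) K) = 0 := by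
  obtain ⟨m, hm⟩ : ∃ m, p - i = m + 1 := ⟨p - i - 1, by omega⟩
  have hbC := congrArg Polynomial.C hb
  simp only [map_add, map_mul, map_zero] at hbC
  simp only [map_add, map_mul, map_pow, aeval_X, aeval_C, Polynomial.algebraMap_eq,
    curve_one, curve_two, hm, Nat.add_sub_cancel]
  linear_combination Polynomial.X ^ (m + 1) * (Polynomial.C b * Polynomial.X) ^ i * hbC

lemma aeval_curve_last_binomial (hp : 1 ≤ p) (hlast : c0 * b ^ (p - 1) + cw * w = 0) :
    aeval (curve p b w) (C c0 * X 1 * X 2 ^ (p - 1) + C cw * X 3 * X 0 : MvPolynomial (Fin 4) K)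
      = 0 := by
  obtain ⟨n, rfl⟩ : ∃ n, p = n + 1 := ⟨p - 1, by omega⟩
  have hwC := congrArg Polynomial.C hlast
  simp only [map_add, map_mul, map_pow, map_zero, Nat.add_sub_cancel] at hwC
  simp only [map_add, map_mul, map_pow, aeval_X, aeval_C, Polynomial.algebraMap_eq,
    curve_zero, curve_one, curve_two, curve_three, Nat.add_sub_cancel]
  linear_combination Polynomial.X ^ (n + 1) * hwC

lemma span_gens6_le_comap_aeval_curve (hp : 1 ≤ p) (hb : c0 + cw * b = 0)
    (hlast : c0 * b ^ (p - 1) + cw * w = 0) :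
    Ideal.span (gens6 p c0 cw) ≤
      (Ideal.span {Polynomial.X ^ (p + 1)}).comap (aeval (curve p b w)) := by
  refine Ideal.span_le.mpr fun g hg => ?_
  simp only [gens6, Set.mem_union, Set.mem_insert_iff, Set.mem_singleton_iff,
    Set.mem_ofPred_eq] at hg
  rw [SetLike.mem_coe, Ideal.mem_comap, Ideal.mem_span_singleton]
  rcases hg with (((rfl | rfl | rfl) | ⟨i, -, hi, rfl⟩) | ⟨i, -, hi, rfl⟩) | ⟨i, hi1, hi, rfl⟩
  · rw [aeval_curve_first_binomial hp hb]; exact dvd_zero _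
  · rw [aeval_curve_last_binomial hp hlast]; exact dvd_zero _
  · rw [map_pow, aeval_X, curve_zero, ← pow_mul]
    exact pow_dvd_pow _ (by omega)
  · rw [aeval_curve_chain_binomial (by omega) hb]; exact dvd_zero _
  · have : aeval (curve p b w) (X 0 * X 1 ^ (p - i) * X 2 ^ i : MvPolynomial (Fin 4) K) =
        Polynomial.C (b ^ i) * Polynomial.X ^ (p + (p - i) + i) := by
      simp only [map_mul, map_pow, aeval_X, curve_zero, curve_one, curve_two]; ring
    rw [this]
    exact (pow_dvd_pow _ (by omega)).mul_left _
  · have : aeval (curve p b w) (X 1 ^ (p + 1 - i) * X 2 ^ i : MvPolynomial (Fin 4) K) =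
        Polynomial.C (b ^ i) * Polynomial.X ^ (p + 1 - i + i) := by
      simp only [map_mul, map_pow, aeval_X, curve_one, curve_two]; ring
    rw [this]
    exact (pow_dvd_pow _ (by omega)).mul_left _

end Statement15

theorem statement15_general {K : Type*} [Field K] (p : ℕ) [Fact p.Prime]
    (c0 cw : K) (hw : cw ≠ 0) :
    (X 0 : MvPolynomial (Fin 4) K) ∉ Ideal.span (gens6 p c0 cw) := by
  intro hmem
  have hp : 1 ≤ p := (Fact.out : p.Prime).one_le
  have hb : c0 + cw * (-c0 / cw) = 0 := by field_simp; ring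
  have hlast : c0 * (-c0 / cw) ^ (p - 1) + cw * (-(c0 * (-c0 / cw) ^ (p - 1)) / cw) = 0 := by
    field_simp; ring
  have hx := Statement15.span_gens6_le_comap_aeval_curve hp hb hlast hmem
  rw [Ideal.mem_comap, aeval_X, Statement15.curve_zero, Ideal.mem_span_singleton,
    pow_dvd_pow_iff Polynomial.X_ne_zero Polynomial.not_isUnit_X] at hx
  omega

/-- for nonzero `c₀, c_w` in a field of characteristic `p > 0`, the ideal of
`K[x,y,z,w]` generated by the binomial chain
`c₀x + c_w y^(p-1)z, c₀y^(p-1)z + c_w y^(p-2)z², …, c₀y²z^(p-2) + c_w yz^(p-1),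
c₀yz^(p-1) + c_w wx` together with the monomials
`x², xy^(p-1)z, …, xyz^(p-1), y^p z, y^(p-1)z², …, y²z^(p-1), yz^p` does not contain `x`. -/
theorem statement15 {K : Type*} [Field K] (p : ℕ) [Fact p.Prime] [CharP K p]
    (c0 cw : K) (h0 : c0 ≠ 0) (hw : cw ≠ 0) :
    (X 0 : MvPolynomial (Fin 4) K) ∉ Ideal.span (gens6 p c0 cw) :=
  statement15_general p c0 cw hw
end
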